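/- (Theorem 4.5, odd case) For every m ≥ 0, the total number of lattice points on the x-axis, summed over all symmetric Dyck paths of length 2(2m+1) (i.e. n = 2m+1), equals 2 · C(2m+2, m). -/
import Mathlib


/-- Value of a Dyck step: `true` is an up step (+1), `false` a down step (-1). -/
def stepVal (b : Bool) : ℤ := if b then 1 else -1

/-- Partial sum of the first `i` steps of the word `w`. -/
def psum {n : ℕ} (w : Fin n → Bool) (i : ℕ) : ℤ :=
  ∑ j : Fin n, if (j : ℕ) < i then stepVal (w j) else 0

/-- `d n`: number of symmetric Dyck paths of length `2n`, encoded by their left half,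
a word in `{+1,-1}^n` with all partial sums nonnegative. -/
noncomputable def d (n : ℕ) : ℕ := Set.ncard {w : Fin n → Bool | ∀ i ≤ n, 0 ≤ psum w i}

/-- A full symmetric Dyck path of length `2n`: all partial sums nonnegative, total sum `0`,
and the word is antisymmetric under reversal (`w_{2n+1-i} = -w_i`). -/
def IsSymDyck {N : ℕ} (w : Fin N → Bool) : Prop :=
  (∀ i ≤ N, 0 ≤ psum w i) ∧ psum w N = 0 ∧ ∀ i : Fin N, w (Fin.rev i) = !(w i)

/-- The number of lattice points of the path `w` lying on the x-axis. -/
def axisPoints {N : ℕ} (w : Fin N → Bool) : ℕ :=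
  ((Finset.range (N + 1)).filter (fun i => psum w i = 0)).card

open Finset Classical

lemma psum_zero {n : ℕ} (w : Fin n → Bool) : psum w 0 = 0 := by
  simp [psum]

lemma psum_succ {n : ℕ} (w : Fin n → Bool) {i : ℕ} (h : i < n) :
    psum w (i + 1) = psum w i + stepVal (w ⟨i, h⟩) := by
  unfold psum
  have key : ∀ j : Fin n, (if (j : ℕ) < i + 1 then stepVal (w j) else 0)
      = (if (j : ℕ) < i then stepVal (w j) else 0)
        + (if j = ⟨i, h⟩ then stepVal (w j) else 0) := by
    intro j
    rcases lt_trichotomy (j : ℕ) i with hj | hj | hj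
    · have : j ≠ ⟨i, h⟩ := by simp [Fin.ext_iff]; omega
      simp [hj, Nat.lt_succ_of_lt hj, this]
    · have : j = ⟨i, h⟩ := by simp [Fin.ext_iff, hj]
      simp [this, hj]
    · have h1 : ¬ ((j : ℕ) < i + 1) := by omega
      have h2 : ¬ ((j : ℕ) < i) := by omega
      have : j ≠ ⟨i, h⟩ := by simp [Fin.ext_iff]; omega
      simp [h1, h2, this]
  rw [Finset.sum_congr rfl (fun j _ => key j), Finset.sum_add_distrib]
  congr 1
  rw [Finset.sum_ite_eq' Finset.univ (⟨i, h⟩ : Fin n) (fun j => stepVal (w j))]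
  simp

lemma psum_of_ge {n : ℕ} (w : Fin n → Bool) {i : ℕ} (h : n ≤ i) :
    psum w i = psum w n := by
  unfold psum
  apply Finset.sum_congr rfl
  intro j _
  have := j.isLt
  simp [this, lt_of_lt_of_le this h]

lemma stepVal_not (b : Bool) : stepVal (!b) = - stepVal b := by
  cases b <;> simp [stepVal]

lemma psum_parity {n : ℕ} (w : Fin n → Bool) :
    ∀ i, i ≤ n → Even (psum w i + i) := by
  intro i
  induction i with
  | zero => simp [psum_zero]
  | succ i ih =>
    intro h
    have hi : i < n := h
    have := ih (le_of_lt hi)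
    rw [psum_succ w hi]
    rcases this with ⟨c, hc⟩
    cases hb : w ⟨i, hi⟩ <;> simp [stepVal]
    · exact ⟨c, by linarith⟩
    · exact ⟨c + 1, by linarith⟩


lemma psum_snoc {L : ℕ} (v : Fin L → Bool) (b : Bool) {i : ℕ} (h : i ≤ L) :
    psum (Fin.snoc v b) i = psum v i := by
  induction i with
  | zero => simp [psum_zero]
  | succ i ih =>
    have hi : i < L := h
    rw [psum_succ _ (show i < L + 1 by omega), psum_succ _ hi, ih (le_of_lt hi)]
    congr 1
    have : (⟨i, show i < L + 1 by omega⟩ : Fin (L+1)) = Fin.castSucc ⟨i, hi⟩ := rfl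
    rw [this, Fin.snoc_castSucc]

lemma psum_snoc_last {L : ℕ} (v : Fin L → Bool) (b : Bool) :
    psum (Fin.snoc v b) (L + 1) = psum v L + stepVal b := by
  rw [psum_succ _ (Nat.lt_succ_self L), psum_snoc v b le_rfl]
  congr 1
  have : (⟨L, Nat.lt_succ_self L⟩ : Fin (L+1)) = Fin.last L := rfl
  rw [this, Fin.snoc_last]

def nfalse {L : ℕ} (v : Fin L → Bool) : ℕ := ∑ j, if v j then 0 else 1

lemma nfalse_snoc {L : ℕ} (v : Fin L → Bool) (b : Bool) :
    nfalse (Fin.snoc v b) = nfalse v + (if b then 0 else 1) := by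
  unfold nfalse
  rw [Fin.sum_univ_castSucc]
  simp [Fin.snoc_castSucc, Fin.snoc_last]

lemma psum_last_eq {L : ℕ} (v : Fin L → Bool) :
    psum v L + 2 * (nfalse v : ℤ) = L := by
  unfold psum nfalse
  push_cast
  rw [Finset.mul_sum, ← Finset.sum_add_distrib]
  have : ∀ j : Fin L, ((if (j : ℕ) < L then stepVal (v j) else 0)
      + 2 * (if v j then (0:ℤ) else 1)) = 1 := by
    intro j
    have := j.isLt
    cases hv : v j <;> simp [stepVal, this]
  rw [Finset.sum_congr rfl (fun j _ => this j)]
  simp [mul_comm]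


section Sym

variable {n : ℕ}

lemma psum_total (w : Fin (2 * n) → Bool)
    (hsym : ∀ i : Fin (2 * n), w (Fin.rev i) = !(w i)) :
    psum w (2 * n) = 0 := by
  have h1 : psum w (2 * n) = ∑ j : Fin (2 * n), stepVal (w j) := by
    unfold psum
    exact Finset.sum_congr rfl (fun j _ => by simp [j.isLt])
  have h2 : ∑ j : Fin (2 * n), stepVal (w j)
      = ∑ j : Fin (2 * n), stepVal (w (Fin.rev j)) :=
    (Fintype.sum_bijective Fin.rev Fin.rev_bijective _ _ (fun j => rfl)).symm
  have h3 : ∑ j : Fin (2 * n), stepVal (w (Fin.rev j))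
      = - ∑ j : Fin (2 * n), stepVal (w j) := by
    rw [← Finset.sum_neg_distrib]
    exact Finset.sum_congr rfl (fun j _ => by rw [hsym j, stepVal_not])
  have := h2.trans h3
  rw [h1]
  linarith

lemma psum_rev (w : Fin (2 * n) → Bool)
    (hsym : ∀ i : Fin (2 * n), w (Fin.rev i) = !(w i)) :
    ∀ i, i ≤ 2 * n → psum w (2 * n - i) = psum w i := by
  intro i
  induction i with
  | zero => simp [psum_zero, psum_total w hsym]
  | succ i ih =>
    intro h
    have hi : i < 2 * n := h
    have ih' := ih (le_of_lt hi)
    have hlt : 2 * n - i - 1 < 2 * n := by omega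
    have e1 : 2 * n - i = (2 * n - i - 1) + 1 := by omega
    have e2 : psum w (2 * n - i) = psum w (2 * n - (i+1)) + stepVal (w ⟨2 * n - i - 1, hlt⟩) := by
      conv_lhs => rw [e1]
      rw [psum_succ w hlt]
      congr 2
    have hrev : (⟨2 * n - i - 1, hlt⟩ : Fin (2 * n)) = Fin.rev ⟨i, hi⟩ := by
      simp [Fin.ext_iff, Fin.val_rev]
      omega
    rw [hrev, hsym, stepVal_not] at e2
    rw [psum_succ w hi]
    linarith

def halfw (w : Fin (2 * n) → Bool) : Fin n → Bool :=
  fun j => w ⟨j, by omega⟩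

lemma psum_halfw (w : Fin (2 * n) → Bool) :
    ∀ i, i ≤ n → psum (halfw w) i = psum w i := by
  intro i
  induction i with
  | zero => simp [psum_zero]
  | succ i ih =>
    intro h
    have hi : i < n := h
    rw [psum_succ _ hi, psum_succ w (show i < 2 * n by omega), ih (le_of_lt hi)]
    rfl

def extw (v : Fin n → Bool) : Fin (2 * n) → Bool :=
  fun i => if h : (i : ℕ) < n then v ⟨i, h⟩
    else !(v ⟨2 * n - 1 - i, by have := i.isLt; omega⟩)

lemma halfw_extw (v : Fin n → Bool) : halfw (extw v) = v := by
  funext j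
  have hj : (j : ℕ) < n := j.isLt
  simp only [halfw, extw, dif_pos hj]

lemma extw_symm (v : Fin n → Bool) :
    ∀ i : Fin (2 * n), extw v (Fin.rev i) = !(extw v i) := by
  intro i
  have hi := i.isLt
  have hrv : ((Fin.rev i : Fin (2 * n)) : ℕ) = 2 * n - 1 - (i : ℕ) := by
    rw [Fin.val_rev]; omega
  by_cases h : (i : ℕ) < n
  · have h2 : ¬ ((Fin.rev i : Fin (2 * n)) : ℕ) < n := by omega
    simp only [extw, dif_neg h2, dif_pos h]
    congr 2
    simp [Fin.ext_iff]
    omega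
  · have h2 : ((Fin.rev i : Fin (2 * n)) : ℕ) < n := by omega
    simp only [extw, dif_pos h2, dif_neg h, Bool.not_not]
    congr 1
    simp [Fin.ext_iff]
    omega

lemma extw_halfw (w : Fin (2 * n) → Bool)
    (hsym : ∀ i : Fin (2 * n), w (Fin.rev i) = !(w i)) : extw (halfw w) = w := by
  funext i
  have hi := i.isLt
  by_cases h : (i : ℕ) < n
  · simp only [extw, dif_pos h, halfw]
  · simp only [extw, dif_neg h, halfw]
    have hrev : (⟨2 * n - 1 - (i : ℕ), by omega⟩ : Fin (2 * n)) = Fin.rev i := by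
      simp [Fin.ext_iff, Fin.val_rev]; omega
    rw [hrev, hsym, Bool.not_not]

end Sym


def nonnegW {L : ℕ} (v : Fin L → Bool) : Prop := ∀ i ≤ L, 0 ≤ psum v i

section SymHalf

variable {n : ℕ}

lemma nonnegW_halfw {w : Fin (2 * n) → Bool} (hw : IsSymDyck w) : nonnegW (halfw w) := by
  intro i hi
  rw [psum_halfw w i hi]
  exact hw.1 i (by omega)

lemma isSymDyck_extw {v : Fin n → Bool} (hv : nonnegW v) : IsSymDyck (extw v) := by
  have hsym := extw_symm v
  refine ⟨?_, psum_total _ hsym, hsym⟩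
  intro i hi
  have hps : ∀ j, j ≤ n → psum (extw v) j = psum v j := by
    intro j hj
    rw [← psum_halfw (extw v) j hj, halfw_extw]
  by_cases h : i ≤ n
  · rw [hps i h]; exact hv i h
  · have h2 : 2 * n - i ≤ n := by omega
    have := psum_rev (extw v) hsym (2 * n - i) (by omega)
    have e : 2 * n - (2 * n - i) = i := by omega
    rw [e] at this
    rw [this, hps _ h2]
    exact hv _ h2

lemma axis_double (hn : Odd n) (w : Fin (2 * n) → Bool) (hw : IsSymDyck w) :
    axisPoints w = 2 * axisPoints (halfw w) := by
  have hsym := hw.2.2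
  classical
  set p : ℕ → Prop := fun i => psum w i = 0 with hp
  have hpn : ¬ p n := by
    intro h
    have := psum_parity w n (by omega)
    rw [h, zero_add] at this
    rcases hn with ⟨c, hc⟩
    rcases this with ⟨e, he⟩
    omega
  have hsplit : (Finset.range (2 * n + 1)).filter p
      = ((Finset.range n).filter p) ∪ ((Finset.Icc (n+1) (2*n)).filter p) := by
    ext i
    simp only [mem_filter, mem_union, mem_range, mem_Icc]
    constructor
    · rintro ⟨hi, hpi⟩
      have : i ≠ n := fun h => hpn (h ▸ hpi)
      rcases lt_or_ge i n with h | h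
      · exact Or.inl ⟨h, hpi⟩
      · exact Or.inr ⟨⟨by omega, by omega⟩, hpi⟩
    · rintro (⟨hi, hpi⟩ | ⟨⟨h1, h2⟩, hpi⟩)
      · exact ⟨by omega, hpi⟩
      · exact ⟨by omega, hpi⟩
  have hdisj : Disjoint ((Finset.range n).filter p) ((Finset.Icc (n+1) (2*n)).filter p) := by
    rw [Finset.disjoint_left]
    intro a ha hb
    simp only [mem_filter, mem_range, mem_Icc] at ha hb
    omega
  have hcard2 : ((Finset.Icc (n+1) (2*n)).filter p).card
      = ((Finset.range n).filter p).card := by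
    apply Finset.card_bij' (fun i _ => 2 * n - i) (fun i _ => 2 * n - i)
    · intro a ha
      simp only [mem_filter, mem_Icc, mem_range] at ha ⊢
      refine ⟨by omega, ?_⟩
      show psum w (2 * n - a) = 0
      rw [psum_rev w hsym a (by omega)]
      exact ha.2
    · intro a ha
      simp only [mem_filter, mem_range, mem_Icc] at ha ⊢
      refine ⟨⟨by omega, by omega⟩, ?_⟩
      show psum w (2 * n - a) = 0
      rw [psum_rev w hsym a (by omega)]
      exact ha.2
    · intro a ha
      simp only [mem_filter, mem_Icc] at ha
      omega
    · intro a ha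
      simp only [mem_filter, mem_range] at ha
      omega
  have hhalf : axisPoints (halfw w)
      = ((Finset.range n).filter p).card := by
    unfold axisPoints
    have : (Finset.range (n + 1)).filter (fun i => psum (halfw w) i = 0)
        = (Finset.range n).filter p := by
      ext i
      simp only [mem_filter, mem_range]
      constructor
      · rintro ⟨hi, hpi⟩
        rw [psum_halfw w i (by omega)] at hpi
        have : i ≠ n := fun h => hpn (h ▸ hpi)
        exact ⟨by omega, hpi⟩
      · rintro ⟨hi, hpi⟩
        refine ⟨by omega, ?_⟩
        rw [psum_halfw w i (by omega)]
        exact hpi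
    rw [this]
  have hw2 : axisPoints w = ((Finset.range (2 * n + 1)).filter p).card := rfl
  rw [hw2, hsplit, Finset.card_union_of_disjoint hdisj, hcard2, hhalf]
  omega

end SymHalf


open Classical in
noncomputable def NNk (L k : ℕ) : Finset (Fin L → Bool) :=
  Finset.univ.filter (fun v => nonnegW v ∧ nfalse v = k)

noncomputable def Af (L k : ℕ) : ℕ := (NNk L k).card
noncomputable def Wf (L k : ℕ) : ℕ := ∑ v ∈ NNk L k, axisPoints v


def snocEquiv (L : ℕ) : ((Fin L → Bool) × Bool) ≃ (Fin (L + 1) → Bool) where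
  toFun p := Fin.snoc p.1 p.2
  invFun w := (Fin.init w, w (Fin.last L))
  left_inv := by
    rintro ⟨v, b⟩
    simp [Fin.init_snoc, Fin.snoc_last]
  right_inv := by
    intro w
    simp [Fin.snoc_init_self]

lemma nonnegW_snoc_iff {L : ℕ} (v : Fin L → Bool) (b : Bool) :
    nonnegW (Fin.snoc v b) ↔ nonnegW v ∧ 0 ≤ psum v L + stepVal b := by
  constructor
  · intro h
    refine ⟨fun i hi => ?_, ?_⟩
    · have := h i (by omega)
      rwa [psum_snoc v b hi] at this
    · have := h (L + 1) le_rfl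
      rwa [psum_snoc_last v b] at this
  · rintro ⟨h1, h2⟩ i hi
    rcases Nat.lt_or_ge i (L + 1) with h | h
    · rw [psum_snoc v b (by omega)]
      exact h1 i (by omega)
    · have : i = L + 1 := by omega
      rw [this, psum_snoc_last v b]
      exact h2

lemma axis_snoc {L : ℕ} (v : Fin L → Bool) (b : Bool) :
    axisPoints (Fin.snoc v b)
      = axisPoints v + (if psum v L + stepVal b = 0 then 1 else 0) := by
  classical
  unfold axisPoints
  rw [Finset.card_filter, Finset.card_filter, Finset.sum_range_succ]
  congr 1
  · apply Finset.sum_congr rfl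
    intro i hi
    rw [Finset.mem_range] at hi
    rw [psum_snoc v b (by omega)]
  · rw [psum_snoc_last v b]

open Classical in
lemma mem_NNk_snoc {L k : ℕ} (v : Fin L → Bool) (b : Bool) :
    Fin.snoc v b ∈ NNk (L + 1) k
      ↔ (nonnegW v ∧ 0 ≤ psum v L + stepVal b ∧ nfalse v + (if b then 0 else 1) = k) := by
  simp only [NNk, Finset.mem_filter, Finset.mem_univ, true_and,
    nonnegW_snoc_iff, nfalse_snoc]
  tauto

open Classical in
lemma NNk_split (L k : ℕ) (f : (Fin (L + 1) → Bool) → ℕ) :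
    ∑ w ∈ NNk (L + 1) k, f w
      = (∑ v ∈ NNk L k, f (Fin.snoc v true))
        + ∑ v ∈ Finset.univ.filter
            (fun v : Fin L → Bool => nonnegW v ∧ 1 ≤ psum v L ∧ nfalse v + 1 = k),
            f (Fin.snoc v false) := by
  classical
  have h1 : ∑ w ∈ NNk (L + 1) k, f w
      = ∑ w : Fin (L + 1) → Bool, if w ∈ NNk (L + 1) k then f w else 0 := by
    rw [Finset.sum_ite_mem, Finset.univ_inter]
  rw [h1, ← Equiv.sum_comp (snocEquiv L), Fintype.sum_prod_type]
  have h2 : ∀ v : Fin L → Bool, ∑ b : Bool,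
      (if (snocEquiv L) (v, b) ∈ NNk (L + 1) k then f ((snocEquiv L) (v, b)) else 0)
      = (if v ∈ NNk L k then f (Fin.snoc v true) else 0)
        + (if (nonnegW v ∧ 1 ≤ psum v L ∧ nfalse v + 1 = k) then f (Fin.snoc v false) else 0) := by
    intro v
    rw [Fintype.sum_bool]
    have et : (snocEquiv L) (v, true) = Fin.snoc v true := rfl
    have ef : (snocEquiv L) (v, false) = Fin.snoc v false := rfl
    rw [et, ef]
    congr 1
    · by_cases hm : Fin.snoc v true ∈ NNk (L + 1) k
      · rw [if_pos hm, if_pos]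
        rw [mem_NNk_snoc] at hm
        simp only [NNk, Finset.mem_filter, Finset.mem_univ, true_and]
        refine ⟨hm.1, ?_⟩
        have := hm.2.2
        simpa using this
      · rw [if_neg hm, if_neg]
        intro hc
        apply hm
        rw [mem_NNk_snoc]
        simp only [NNk, Finset.mem_filter, Finset.mem_univ, true_and] at hc
        refine ⟨hc.1, ?_, by simpa using hc.2⟩
        have := hc.1 L le_rfl
        simp [stepVal]
        omega
    · by_cases hm : Fin.snoc v false ∈ NNk (L + 1) k
      · rw [if_pos hm, if_pos]
        rw [mem_NNk_snoc] at hm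
        refine ⟨hm.1, ?_, by simpa using hm.2.2⟩
        have := hm.2.1
        simp [stepVal] at this
        omega
      · rw [if_neg hm, if_neg]
        intro hc
        apply hm
        rw [mem_NNk_snoc]
        refine ⟨hc.1, ?_, by simpa using hc.2.2⟩
        simp [stepVal]
        omega
  rw [Finset.sum_congr rfl (fun v _ => h2 v), Finset.sum_add_distrib]
  congr 1
  · rw [Finset.sum_ite_mem, Finset.univ_inter]
  · rw [Finset.sum_filter]


lemma psum_mem_NNk {L k : ℕ} {v : Fin L → Bool} (h : v ∈ NNk L k) :
    psum v L = (L : ℤ) - 2 * k := by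
  simp only [NNk, mem_filter, mem_univ, true_and] at h
  have := psum_last_eq v
  rw [h.2] at this
  omega

lemma NNk_bound {L k : ℕ} (h : L < 2 * k) : NNk L k = ∅ := by
  ext v
  simp only [NNk, mem_filter, mem_univ, true_and, Finset.notMem_empty, iff_false]
  rintro ⟨h1, h2⟩
  have h3 := psum_last_eq v
  have h4 := h1 L le_rfl
  rw [h2] at h3
  omega

lemma Af_bound {L k : ℕ} (h : L < 2 * k) : Af L k = 0 := by
  rw [Af, NNk_bound h]; rfl

lemma Wf_bound {L k : ℕ} (h : L < 2 * k) : Wf L k = 0 := by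
  rw [Wf, NNk_bound h]; rfl

lemma filter_down_eq {L k : ℕ} (h : 2 * (k + 1) ≤ L + 1) :
    Finset.univ.filter
        (fun v : Fin L → Bool => nonnegW v ∧ 1 ≤ psum v L ∧ nfalse v + 1 = k + 1)
      = NNk L k := by
  ext v
  simp only [NNk, mem_filter, mem_univ, true_and]
  constructor
  · rintro ⟨h1, _, h3⟩
    exact ⟨h1, by omega⟩
  · rintro ⟨h1, h2⟩
    refine ⟨h1, ?_, by omega⟩
    have h3 := psum_last_eq v
    rw [h2] at h3
    omega

lemma filter_down_empty {L k : ℕ} (h : ¬ (2 * (k + 1) ≤ L + 1)) :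
    Finset.univ.filter
        (fun v : Fin L → Bool => nonnegW v ∧ 1 ≤ psum v L ∧ nfalse v + 1 = k + 1)
      = ∅ := by
  ext v
  simp only [mem_filter, mem_univ, true_and, Finset.notMem_empty, iff_false]
  rintro ⟨h1, h2, h3⟩
  have h4 := psum_last_eq v
  have : nfalse v = k := by omega
  rw [this] at h4
  omega

lemma filter_down_zero (L : ℕ) :
    Finset.univ.filter
        (fun v : Fin L → Bool => nonnegW v ∧ 1 ≤ psum v L ∧ nfalse v + 1 = 0)
      = ∅ := by
  ext v
  simp

lemma Af_succ_zero (L : ℕ) : Af (L + 1) 0 = Af L 0 := by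
  have := NNk_split L 0 (fun _ => 1)
  simp only [filter_down_zero, Finset.sum_empty, Finset.sum_const, smul_eq_mul, mul_one,
    add_zero] at this
  rw [Af, Af, Finset.card_eq_sum_ones, Finset.card_eq_sum_ones]
  simpa using this

lemma Af_succ (L k : ℕ) :
    Af (L + 1) (k + 1) = Af L (k + 1) + if 2 * (k + 1) ≤ L + 1 then Af L k else 0 := by
  have hs := NNk_split L (k + 1) (fun _ => 1)
  rw [Af, Af, Finset.card_eq_sum_ones, Finset.card_eq_sum_ones]
  by_cases h : 2 * (k + 1) ≤ L + 1
  · rw [if_pos h]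
    rw [filter_down_eq h] at hs
    rw [hs, Af, Finset.card_eq_sum_ones]
  · rw [if_neg h, add_zero]
    rw [filter_down_empty h, Finset.sum_empty, add_zero] at hs
    exact hs

lemma Wf_succ_zero (L : ℕ) : Wf (L + 1) 0 = Wf L 0 := by
  have hs := NNk_split L 0 (axisPoints)
  rw [filter_down_zero, Finset.sum_empty, add_zero] at hs
  rw [Wf, Wf, hs]
  apply Finset.sum_congr rfl
  intro v hv
  rw [axis_snoc]
  have h1 := psum_mem_NNk hv
  have : ¬ (psum v L + stepVal true = 0) := by
    simp only [NNk, mem_filter, mem_univ, true_and] at hv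
    have := hv.1 L le_rfl
    simp [stepVal]
    omega
  rw [if_neg this, add_zero]

lemma Wf_succ (L k : ℕ) :
    Wf (L + 1) (k + 1) = Wf L (k + 1)
      + if 2 * (k + 1) ≤ L + 1
          then (Wf L k + if L + 1 = 2 * (k + 1) then Af L k else 0)
          else 0 := by
  have hs := NNk_split L (k + 1) (axisPoints)
  have hup : ∀ v ∈ NNk L (k + 1), axisPoints (Fin.snoc v true) = axisPoints v := by
    intro v hv
    rw [axis_snoc]
    have : ¬ (psum v L + stepVal true = 0) := by
      simp only [NNk, mem_filter, mem_univ, true_and] at hv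
      have := hv.1 L le_rfl
      simp [stepVal]
      omega
    rw [if_neg this, add_zero]
  rw [Wf, hs, Finset.sum_congr rfl hup]
  by_cases h : 2 * (k + 1) ≤ L + 1
  · rw [if_pos h, filter_down_eq h]
    congr 1
    have hdown : ∀ v ∈ NNk L k, axisPoints (Fin.snoc v false)
        = axisPoints v + if L + 1 = 2 * (k + 1) then 1 else 0 := by
      intro v hv
      rw [axis_snoc]
      have h1 := psum_mem_NNk hv
      congr 1
      by_cases he : L + 1 = 2 * (k + 1)
      · rw [if_pos he, if_pos]
        simp [stepVal]
        omega
      · rw [if_neg he, if_neg]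
        simp [stepVal]
        omega
    rw [Finset.sum_congr rfl hdown, Finset.sum_add_distrib]
    congr 1
    by_cases he : L + 1 = 2 * (k + 1)
    · simp only [if_pos he, Finset.sum_const, smul_eq_mul, mul_one]
      rfl
    · simp [if_neg he]
  · rw [if_neg h, filter_down_empty h, Finset.sum_empty, add_zero, add_zero]
    rfl


lemma NNk_zero : NNk 0 0 = (Finset.univ : Finset (Fin 0 → Bool)) := by
  ext v
  simp only [NNk, mem_filter, mem_univ, true_and, iff_true]
  constructor
  · intro i hi
    have : i = 0 := by omega
    rw [this, psum_zero]
  · simp [nfalse]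

lemma axisPoints_nil (v : Fin 0 → Bool) : axisPoints v = 1 := by
  simp [axisPoints, psum_zero, Finset.filter_singleton]

lemma Af_zero_zero : Af 0 0 = 1 := by
  rw [Af, NNk_zero, Finset.card_univ]
  simp

lemma Wf_zero_zero : Wf 0 0 = 1 := by
  rw [Wf, NNk_zero]
  rw [Finset.sum_congr rfl (fun v _ => axisPoints_nil v), Finset.sum_const, Finset.card_univ]
  simp

lemma Af_zero (L : ℕ) : Af L 0 = 1 := by
  induction L with
  | zero => exact Af_zero_zero
  | succ L ih => rw [Af_succ_zero, ih]

lemma Wf_zero (L : ℕ) : Wf L 0 = 1 := by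
  induction L with
  | zero => exact Wf_zero_zero
  | succ L ih => rw [Wf_succ_zero, ih]

lemma Af_closed : ∀ (L k : ℕ), 2 * (k + 1) ≤ L →
    Af L (k + 1) + Nat.choose L k = Nat.choose L (k + 1) := by
  intro L
  induction L with
  | zero => intro k h; omega
  | succ L ih =>
    intro k h
    rw [Af_succ L k, if_pos (by omega)]
    rcases Nat.lt_or_ge (2 * (k + 1)) (L + 1) with hlt | hge
    · rcases k with _ | k'
      · have h1 : Af L (0 + 1) + Nat.choose L 0 = Nat.choose L (0 + 1) := ih 0 (by omega)
        have h0 : Af L 0 = 1 := Af_zero L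
        have c1 : Nat.choose L 0 = 1 := Nat.choose_zero_right L
        have c2 : Nat.choose L (0 + 1) = L := Nat.choose_one_right L
        have c3 : Nat.choose (L + 1) 0 = 1 := Nat.choose_zero_right (L + 1)
        have c4 : Nat.choose (L + 1) (0 + 1) = L + 1 := Nat.choose_one_right (L + 1)
        omega
      · have h1 : Af L (k' + 1 + 1) + Nat.choose L (k' + 1) = Nat.choose L (k' + 1 + 1) :=
          ih (k' + 1) (by omega)
        have h2 : Af L (k' + 1) + Nat.choose L k' = Nat.choose L (k' + 1) := ih k' (by omega)
        have p1 : Nat.choose (L + 1) (k' + 1 + 1)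
            = Nat.choose L (k' + 1) + Nat.choose L (k' + 1 + 1) := Nat.choose_succ_succ L (k' + 1)
        have p2 : Nat.choose (L + 1) (k' + 1)
            = Nat.choose L k' + Nat.choose L (k' + 1) := Nat.choose_succ_succ L k'
        omega
    · have hL : L = 2 * k + 1 := by omega
      rcases k with _ | k'
      · have hL1 : L = 1 := by omega
        subst hL1
        have hAf0 : Af 1 (0 + 1) = 0 := Af_bound (by omega)
        have h0 : Af 1 0 = 1 := Af_zero 1
        have c3 : Nat.choose (1 + 1) 0 = 1 := by decide
        have c4 : Nat.choose (1 + 1) (0 + 1) = 2 := by decide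
        omega
      · have hAf0 : Af L (k' + 1 + 1) = 0 := Af_bound (by omega)
        have h2 : Af L (k' + 1) + Nat.choose L k' = Nat.choose L (k' + 1) := ih k' (by omega)
        have p1 : Nat.choose (L + 1) (k' + 1 + 1)
            = Nat.choose L (k' + 1) + Nat.choose L (k' + 1 + 1) := Nat.choose_succ_succ L (k' + 1)
        have p2 : Nat.choose (L + 1) (k' + 1)
            = Nat.choose L k' + Nat.choose L (k' + 1) := Nat.choose_succ_succ L k'
        have psym : Nat.choose L (k' + 1 + 1) = Nat.choose L (k' + 1) := by
          have := Nat.choose_symm (show k' + 1 ≤ L by omega)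
          rw [show L - (k' + 1) = k' + 1 + 1 by omega] at this
          exact this
        omega

lemma Wf_one : ∀ L : ℕ, 2 ≤ L → Wf L 1 = L := by
  intro L hL
  induction L, hL using Nat.le_induction with
  | base =>
    rw [show (2:ℕ) = 1 + 1 from rfl, Wf_succ 1 0, if_pos (by omega), if_pos (by omega)]
    rw [Wf_bound (by omega), Wf_zero]
    rw [show (1:ℕ) = 0 + 1 from rfl, Af_succ_zero, Af_zero_zero]
  | succ L hL ih =>
    rw [Wf_succ L 0, if_pos (by omega), if_neg (by omega), Wf_zero, ih]

lemma Wf_closed : ∀ (L k : ℕ), 2 * (k + 2) ≤ L →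
    Wf L (k + 2) + Nat.choose L k = Nat.choose L (k + 2) := by
  intro L
  induction L with
  | zero => intro k h; omega
  | succ L ih =>
    intro k h
    rw [Wf_succ L (k + 1), if_pos (by omega)]
    rcases Nat.lt_or_ge (2 * (k + 2)) (L + 1) with hlt | hge
    · rw [if_neg (by omega)]
      rcases k with _ | k'
      · have h1 : Wf L (0 + 1 + 1) + Nat.choose L 0 = Nat.choose L (0 + 1 + 1) :=
          ih 0 (by omega)
        have h2 : Wf L (0 + 1) = L := Wf_one L (by omega)
        have c1 : Nat.choose L 0 = 1 := Nat.choose_zero_right L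
        have c3 : Nat.choose (L + 1) 0 = 1 := Nat.choose_zero_right (L + 1)
        have p1 : Nat.choose (L + 1) (0 + 2)
            = Nat.choose L (0 + 1) + Nat.choose L (0 + 1 + 1) := Nat.choose_succ_succ L (0 + 1)
        have c2 : Nat.choose L (0 + 1) = L := Nat.choose_one_right L
        omega
      · have h1 : Wf L (k' + 1 + 1 + 1) + Nat.choose L (k' + 1)
            = Nat.choose L (k' + 1 + 1 + 1) := ih (k' + 1) (by omega)
        have h2 : Wf L (k' + 1 + 1) + Nat.choose L k' = Nat.choose L (k' + 1 + 1) :=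
          ih k' (by omega)
        have p1 : Nat.choose (L + 1) (k' + 1 + 2)
            = Nat.choose L (k' + 1 + 1) + Nat.choose L (k' + 1 + 1 + 1) :=
          Nat.choose_succ_succ L (k' + 2)
        have p2 : Nat.choose (L + 1) (k' + 1)
            = Nat.choose L k' + Nat.choose L (k' + 1) := Nat.choose_succ_succ L k'
        omega
    · have hL : L = 2 * k + 3 := by omega
      rw [if_pos (by omega)]
      rcases k with _ | k'
      · have hL1 : L = 3 := by omega
        subst hL1
        have hWf0 : Wf 3 (0 + 1 + 1) = 0 := Wf_bound (by omega)
        have h2 : Wf 3 (0 + 1) = 3 := Wf_one 3 (by omega)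
        have hAf : Af 3 (0 + 1) + Nat.choose 3 0 = Nat.choose 3 (0 + 1) := Af_closed 3 0 (by omega)
        have c1 : Nat.choose 3 0 = 1 := by decide
        have c2 : Nat.choose 3 (0 + 1) = 3 := by decide
        have c3 : Nat.choose (3 + 1) 0 = 1 := by decide
        have c4 : Nat.choose (3 + 1) (0 + 2) = 6 := by decide
        omega
      · have hWf0 : Wf L (k' + 1 + 1 + 1) = 0 := Wf_bound (by omega)
        have hAf : Af L (k' + 1 + 1) + Nat.choose L (k' + 1) = Nat.choose L (k' + 1 + 1) :=
          Af_closed L (k' + 1) (by omega)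
        have h2 : Wf L (k' + 1 + 1) + Nat.choose L k' = Nat.choose L (k' + 1 + 1) :=
          ih k' (by omega)
        have p1 : Nat.choose (L + 1) (k' + 1 + 2)
            = Nat.choose L (k' + 1 + 1) + Nat.choose L (k' + 1 + 1 + 1) :=
          Nat.choose_succ_succ L (k' + 2)
        have p2 : Nat.choose (L + 1) (k' + 1)
            = Nat.choose L k' + Nat.choose L (k' + 1) := Nat.choose_succ_succ L k'
        have psym : Nat.choose L (k' + 1 + 1 + 1) = Nat.choose L (k' + 1 + 1) := by
          have := Nat.choose_symm (show k' + 1 + 1 ≤ L by omega)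
          rw [show L - (k' + 1 + 1) = k' + 1 + 1 + 1 by omega] at this
          exact this
        omega

lemma sum_Wf (m : ℕ) :
    ∑ k ∈ Finset.range (m + 1), Wf (2 * m + 1) k = Nat.choose (2 * m + 2) m := by
  rcases m with _ | m'
  · simp [Wf_zero]
  · set L := 2 * (m' + 1) + 1 with hLdef
    have claim : ∀ t, t + 1 ≤ m' + 1 →
        ∑ k ∈ Finset.range (t + 2), Wf L k
          = Nat.choose L (t + 1) + Nat.choose L t := by
      intro t
      induction t with
      | zero =>
        intro _
        rw [Finset.sum_range_succ, Finset.sum_range_one, Wf_zero, Wf_one L (by omega)]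
        have c1 : Nat.choose L (0 + 1) = L := Nat.choose_one_right L
        have c2 : Nat.choose L 0 = 1 := Nat.choose_zero_right L
        omega
      | succ t iht =>
        intro ht
        rw [Finset.sum_range_succ, iht (by omega)]
        have h1 : Wf L (t + 2) + Nat.choose L t = Nat.choose L (t + 1 + 1) :=
          Wf_closed L t (by omega)
        omega
    have hc := claim m' (by omega)
    have pasc : Nat.choose (L + 1) (m' + 1)
        = Nat.choose L m' + Nat.choose L (m' + 1) := Nat.choose_succ_succ L m'
    have key : ∑ k ∈ Finset.range (m' + 2), Wf L k = Nat.choose (L + 1) (m' + 1) := by omega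
    rw [show 2 * (m' + 1) + 2 = L + 1 by omega]
    exact key


open Classical in
/-- **Theorem 4.5 (odd case).** The total number of points on the x-axis, over all
symmetric Dyck paths of length `2(2m+1)` (i.e. `n = 2m+1`), is `2·C(2m+2, m)`. -/
theorem total_axis_points_odd (m : ℕ) :
    ∑ w ∈ Finset.univ.filter (fun w : Fin (2 * (2 * m + 1)) → Bool => IsSymDyck w),
      axisPoints w = 2 * Nat.choose (2 * m + 2) m := by
  classical
  have hodd : Odd (2 * m + 1) := ⟨m, by omega⟩
  have step1 :
      ∑ w ∈ Finset.univ.filter (fun w : Fin (2 * (2 * m + 1)) → Bool => IsSymDyck w),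
        axisPoints w
      = ∑ v ∈ Finset.univ.filter (fun v : Fin (2 * m + 1) → Bool => nonnegW v),
          2 * axisPoints v := by
    apply Finset.sum_bij' (fun w _ => halfw w) (fun v _ => extw v)
    · intro w hw
      simp only [Finset.mem_filter, Finset.mem_univ, true_and] at hw ⊢
      exact nonnegW_halfw hw
    · intro v hv
      simp only [Finset.mem_filter, Finset.mem_univ, true_and] at hv ⊢
      exact isSymDyck_extw hv
    · intro w hw
      simp only [Finset.mem_filter, Finset.mem_univ, true_and] at hw
      exact extw_halfw w hw.2.2
    · intro v _
      exact halfw_extw v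
    · intro w hw
      simp only [Finset.mem_filter, Finset.mem_univ, true_and] at hw
      exact axis_double hodd w hw
  rw [step1, ← Finset.mul_sum]
  congr 1
  have hmap : ∀ v ∈ Finset.univ.filter (fun v : Fin (2 * m + 1) → Bool => nonnegW v),
      nfalse v ∈ Finset.range (m + 1) := by
    intro v hv
    simp only [Finset.mem_filter, Finset.mem_univ, true_and] at hv
    have h1 := psum_last_eq v
    have h2 := hv (2 * m + 1) le_rfl
    simp only [Finset.mem_range]
    omega
  have hfib := Finset.sum_fiberwise_of_maps_to hmap axisPoints
  rw [← hfib, ← sum_Wf m]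
  apply Finset.sum_congr rfl
  intro k _
  apply Finset.sum_congr
  · rw [Finset.filter_filter]
    rfl
  · intro _ _; rfl
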